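/- Let λ > 0 and N∘ ∈ ℕ, and let Φ∘ be as in the context. Define Ψ(x) := Φ∘(x/2) − Φ∘(x). Then Ψ is an even C_c^∞(ℝ) function with Ψ(s) = 0 for |s| ≤ 1/2 and Ψ(s) = 0 for |s| ≥ 2, and ∫_0^∞ ϱ^λ (d/dϱ)^j Ψ̂(ϱ) dϱ = 0 for every integer j with 0 ≤ j ≤ N∘. -/

import Mathlib

open MeasureTheory Filter
open scoped ENNReal NNReal RealInnerProductSpace BigOperators Topology

noncomputable section

/-- `ℝ^d` as a Euclidean space. -/
abbrev Euc (d : ℕ) : Type := EuclideanSpace ℝ (Fin d)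

/-- The geometric setup: `Ω` is a bounded open convex subset of `ℝ^d` containing the origin,
`ρ` is its Minkowski functional, which is assumed to be smooth away from the origin and
positive away from the origin. -/
structure IsMinkowskiGauge (d : ℕ) (Ω : Set (Euc d)) (ρ : Euc d → ℝ) : Prop where
  isOpen : IsOpen Ω
  convex : Convex ℝ Ω
  isBounded : Bornology.IsBounded Ω
  zero_mem : (0 : Euc d) ∈ Ω
  eq_gauge : ρ = gauge Ω
  smooth : ContDiffOn ℝ (⊤ : ℕ∞) ρ {(0 : Euc d)}ᶜ
  pos : ∀ ξ : Euc d, ξ ≠ 0 → 0 < ρ ξ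

/-- Everywhere nonvanishing Gaussian curvature of `∂Ω = {ρ = 1}`: for every `ξ ≠ 0`
the Hessian of `ρ` at `ξ` has rank `d - 1`. -/
def HasNonvanishingCurvature (d : ℕ) (ρ : Euc d → ℝ) : Prop :=
  ∀ ξ : Euc d, ξ ≠ 0 →
    LinearMap.rank ((fderiv ℝ (fderiv ℝ ρ) ξ : Euc d →L[ℝ] (Euc d →L[ℝ] ℝ)) :
      Euc d →ₗ[ℝ] (Euc d →L[ℝ] ℝ)) = (d - 1 : ℕ)

/-- The Fourier transform `f̂(ξ) = ∫ f(y) e^{−i⟨y,ξ⟩} dy` on `ℝ^d`. -/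
def FTd {d : ℕ} (f : Euc d → ℂ) (ξ : Euc d) : ℂ :=
  ∫ y : Euc d, f y * Complex.exp (-(Complex.I * (⟪y, ξ⟫ : ℂ)))

/-- The Riesz mean `R^λ_{a,t} f(x) = (2π)^{-d} ∫ (1 - ρ(ξ)^a/t^a)_+^λ f̂(ξ) e^{i⟨x,ξ⟩} dξ`. -/
def RieszMean {d : ℕ} (ρ : Euc d → ℝ) (a lam t : ℝ) (f : Euc d → ℂ) (x : Euc d) : ℂ :=
  (((2 * Real.pi) ^ d)⁻¹ : ℝ) •
    ∫ ξ : Euc d, ((max (1 - ρ ξ ^ a / t ^ a) 0) ^ lam : ℝ) •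
      (FTd f ξ * Complex.exp (Complex.I * (⟪x, ξ⟫ : ℂ)))

/-- The critical index `λ(p) = d(1/p - 1/2) - 1/2`. -/
def criticalIndex (d : ℕ) (p : ℝ) : ℝ := (d : ℝ) * (1 / p - 1 / 2) - 1 / 2

/-- One-dimensional Fourier transform `φ̂(ϱ) = ∫ φ(s) e^{-isϱ} ds`. -/
def FT1 (φ : ℝ → ℂ) (ϱ : ℝ) : ℂ :=
  ∫ s : ℝ, φ s * Complex.exp (-(Complex.I * (s : ℂ) * (ϱ : ℂ)))

/-- One-dimensional Fourier transform of a real-valued function. -/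
def FT1R (Φ : ℝ → ℝ) : ℝ → ℂ := FT1 (fun s => (Φ s : ℂ))

/-- The pieces `h_{λ,ℓ}` of the decomposition of the Riesz multiplier. -/
def hfun (χ Φ Ψ : ℝ → ℝ) (lam : ℝ) : ℕ → ℝ → ℂ
  | 0 => fun ϱ => ((2 * Real.pi)⁻¹ * χ ϱ : ℝ) •
      ∫ u : ℝ, ((max (1 - u) 0) ^ lam : ℝ) • FT1R Φ (ϱ - u)
  | (ℓ + 1) => fun ϱ => ((2 * Real.pi)⁻¹ * χ ϱ : ℝ) •
      ∫ u : ℝ, ((max (1 - u) 0) ^ lam : ℝ) •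
        (((2 : ℝ) ^ ℓ) • FT1R Ψ ((2 : ℝ) ^ ℓ * (ϱ - u)))

/-- The data entering the construction of `h_{λ,ℓ}`: a cutoff `χ ∈ C_c^∞((1/2,2))`, an even
`Φ = Φ∘ ∈ C_c^∞(ℝ)` with `Φ∘ = 1` on `[-1/2,1/2]`, `supp Φ∘ ⊆ [-1,1]`, satisfying the moment
cancellation conditions, and `Ψ(x) = Φ∘(x/2) - Φ∘(x)`. -/
structure HData (lam : ℝ) (N0 : ℕ) (χ Φ Ψ : ℝ → ℝ) : Prop where
  hχsm : ContDiff ℝ (⊤ : ℕ∞) χ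
  hχsupp : Function.support χ ⊆ Set.Ioo (1/2 : ℝ) 2
  hΦsm : ContDiff ℝ (⊤ : ℕ∞) Φ
  hΦeven : ∀ s, Φ (-s) = Φ s
  hΦone : ∀ s : ℝ, |s| ≤ 1/2 → Φ s = 1
  hΦzero : ∀ s : ℝ, 1 ≤ |s| → Φ s = 0
  hΦcanc : ∀ j : ℕ, j ≤ N0 → (j : ℝ) ≠ lam →
    (∫ ϱ in Set.Ioi (0 : ℝ), ((ϱ ^ lam : ℝ) : ℂ) * iteratedDeriv j (FT1R Φ) ϱ) = 0
  hΨ : Ψ = fun x => Φ (x / 2) - Φ x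

/-- Inverse Fourier transform on `ℝ^d`. -/
def invFTd {d : ℕ} (m : Euc d → ℂ) (x : Euc d) : ℂ :=
  (((2 * Real.pi) ^ d)⁻¹ : ℝ) •
    ∫ ξ : Euc d, m ξ * Complex.exp (Complex.I * (⟪x, ξ⟫ : ℂ))

/-- The Fourier multiplier operator `m(D) f = (𝓕⁻¹ m) * f`. -/
def mulOp {d : ℕ} (m : Euc d → ℂ) (f : Euc d → ℂ) (x : Euc d) : ℂ :=
  ∫ y : Euc d, invFTd m (x - y) * f y

/-- The Hardy–Littlewood maximal function. -/
def HLMaximal {d : ℕ} (w : Euc d → ℝ) (x : Euc d) : ℝ≥0∞ :=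
  ⨆ r : {r : ℝ // 0 < r},
    (volume (Metric.ball x r.1))⁻¹ * ∫⁻ y in Metric.ball x r.1, ENNReal.ofReal (w y)

/-- `w` is an `A₁` weight. -/
structure IsA1Weight {d : ℕ} (w : Euc d → ℝ) : Prop where
  nonneg : ∀ x, 0 ≤ w x
  locInt : LocallyIntegrable w volume
  ne_zero : ¬ (w =ᵐ[(volume : Measure (Euc d))] (0 : Euc d → ℝ))
  maximal_le : ∃ C : ℝ, ∀ᵐ x ∂(volume : Measure (Euc d)),
    HLMaximal w x ≤ ENNReal.ofReal (C * w x)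

/-- `w` satisfies a reverse Hölder inequality with exponent `σ`. -/
def IsRH {d : ℕ} (σ : ℝ) (w : Euc d → ℝ) : Prop :=
  ∃ C : ℝ, ∀ (x : Euc d) (r : ℝ), 0 < r →
    ((volume (Metric.ball x r))⁻¹ *
        ∫⁻ y in Metric.ball x r, ENNReal.ofReal (w y) ^ σ) ^ (1 / σ) ≤
      ENNReal.ofReal C *
        ((volume (Metric.ball x r))⁻¹ * ∫⁻ y in Metric.ball x r, ENNReal.ofReal (w y))

/-- The weighted `L^p(w)` (quasi-)norm. -/
def wLpNorm {d : ℕ} (p : ℝ) (w : Euc d → ℝ) (g : Euc d → ℂ) : ℝ≥0∞ :=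
  (∫⁻ x, (‖g x‖₊ : ℝ≥0∞) ^ p * ENNReal.ofReal (w x)) ^ (1 / p)

/-- The weighted weak `L^{p,∞}(w)` (quasi-)norm. -/
def wWeakNorm {d : ℕ} (p : ℝ) (w : Euc d → ℝ) (g : Euc d → ℂ) : ℝ≥0∞ :=
  ⨆ α : {α : ℝ // 0 < α},
    ENNReal.ofReal α.1 *
      (∫⁻ x in {x : Euc d | α.1 < ‖g x‖}, ENNReal.ofReal (w x)) ^ (1 / p)

/-- A (half-open, axes-parallel) cube `x + [0,s)^d` in `ℝ^d`. -/
def IsCube {d : ℕ} (Q : Set (Euc d)) : Prop :=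
  ∃ (x : Euc d) (s : ℝ), 0 < s ∧ Q = {y : Euc d | ∀ i, y i ∈ Set.Ico (x i) (x i + s)}

/-- The average `⟨f⟩_{Q,p} = (|Q|⁻¹ ∫_Q |f|^p)^{1/p}`. -/
def cubeAvg {d : ℕ} (p : ℝ) (Q : Set (Euc d)) (f : Euc d → ℂ) : ℝ≥0∞ :=
  ((volume Q)⁻¹ * ∫⁻ x in Q, (‖f x‖₊ : ℝ≥0∞) ^ p) ^ (1 / p)

/-- A `γ`-sparse (finite) family of cubes. -/
def IsSparseFamily {d : ℕ} (γ : ℝ) (𝔖 : Finset (Set (Euc d))) : Prop :=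
  (∀ Q ∈ 𝔖, IsCube Q) ∧
  ∃ E : Set (Euc d) → Set (Euc d),
    (∀ Q ∈ 𝔖, MeasurableSet (E Q) ∧ E Q ⊆ Q ∧
      ENNReal.ofReal γ * volume Q ≤ volume (E Q)) ∧
    (𝔖 : Set (Set (Euc d))).Pairwise fun Q Q' => Disjoint (E Q) (E Q')

/-- The maximal sparse form `Λ*_{p,q}(f₁,f₂)` (supremum over `1/2`-sparse families). -/
def sparseFormMax {d : ℕ} (p q : ℝ) (f₁ f₂ : Euc d → ℂ) : ℝ≥0∞ :=
  ⨆ 𝔖 : {𝔖 : Finset (Set (Euc d)) // IsSparseFamily (1/2) 𝔖},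
    ∑ Q ∈ 𝔖.1, volume Q * cubeAvg p Q f₁ * cubeAvg q Q f₂

/-- The sparse bound `T ∈ Sp(p,q)`. -/
def SparseBound {d : ℕ} (p q : ℝ) (T : (Euc d → ℂ) → Euc d → ℂ) : Prop :=
  ∃ C : ℝ, ∀ f₁ f₂ : Euc d → ℂ,
    ContDiff ℝ (⊤ : ℕ∞) f₁ → HasCompactSupport f₁ →
    ContDiff ℝ (⊤ : ℕ∞) f₂ → HasCompactSupport f₂ →
    ENNReal.ofReal ‖∫ x, T f₁ x * f₂ x‖ ≤ ENNReal.ofReal C * sparseFormMax p q f₁ f₂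

/-- The exponent `r_*(p, p∘, r∘)`. -/
def rStar (d : ℕ) (p p0 r0 : ℝ) : ℝ :=
  if p ≤ 2 * ((d : ℝ) + 1) / ((d : ℝ) + 3) then
    (((d : ℝ) + 1) / ((d : ℝ) - 1) * (1 - 1 / p))⁻¹
  else
    ((1 / r0 * (((d : ℝ) + 3) / (2 * ((d : ℝ) + 1)) - 1 / p) +
        1 / 2 * (1 / p - 1 / p0)) /
      (((d : ℝ) + 3) / (2 * ((d : ℝ) + 1)) - 1 / p0))⁻¹

/-- The exponent `q_*(p, p∘, r∘)`, the conjugate of `r_*(p, p∘, r∘)`. -/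
def qStar (d : ℕ) (p p0 r0 : ℝ) : ℝ := (1 - 1 / rStar d p p0 r0)⁻¹

/-- The trapezoid `∏_d(λ)` with corners `P₁, P₂, P₃, P₄`. -/
def trapez (d : ℕ) (lam : ℝ) : Set (ℝ × ℝ) :=
  convexHull ℝ
    {((2*lam + (d:ℝ) + 1)/(2*(d:ℝ)), ((d:ℝ) - 2*lam - 1)/(2*(d:ℝ))),
     ((2*lam + (d:ℝ) + 1)/(2*(d:ℝ)),
       ((d:ℝ) - 1)/(2*(d:ℝ)) + lam*((d:ℝ) + 1)/((d:ℝ)*((d:ℝ) - 1))),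
     (((d:ℝ) - 1)/(2*(d:ℝ)) + lam*((d:ℝ) + 1)/((d:ℝ)*((d:ℝ) - 1)),
       (2*lam + (d:ℝ) + 1)/(2*(d:ℝ))),
     (((d:ℝ) - 2*lam - 1)/(2*(d:ℝ)), (2*lam + (d:ℝ) + 1)/(2*(d:ℝ)))}

/-- A dyadic cube `2^k(m + [0,1)^d)`, recorded by its generation `k` and position `m`. -/
structure DyadicCube (d : ℕ) where
  k : ℤ
  m : Fin d → ℤ
deriving DecidableEq

/-- The subset of `ℝ^d` corresponding to a dyadic cube. -/
def DyadicCube.set {d : ℕ} (Q : DyadicCube d) : Set (Euc d) :=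
  {x : Euc d | ∀ i, x i ∈ Set.Ico ((2:ℝ) ^ Q.k * (Q.m i : ℝ)) ((2:ℝ) ^ Q.k * ((Q.m i : ℝ) + 1))}

/-- `μ(𝔔) = Σ_{Q ∈ 𝔔} |Q|`. -/
def dyadicMeasure {d : ℕ} (𝔔 : Finset (DyadicCube d)) : ℝ≥0∞ :=
  ∑ Q ∈ 𝔔, volume Q.set

/-- The class `𝒴_M` of normalized bump functions. -/
def MemYM (M : ℕ) (χ : ℝ → ℂ) : Prop :=
  ContDiff ℝ (M : ℕ∞) χ ∧ Function.support χ ⊆ Set.Ioo (1/2 : ℝ) 2 ∧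
    ∑ ν ∈ Finset.range (M + 1), (⨆ s : ℝ, ‖iteratedDeriv ν χ s‖) ≤ 1

/-- The function `Σ_{j ≥ 1} 2^{j(d+1)/2} m_j(D)[Σ_{Q ∈ 𝔇_j} f_Q]` appearing in `VBR(p,r)`,
where `m_j(ξ) = χ_j(2^j(1 - ρ(ξ)))`. -/
def vbrSum {d : ℕ} (ρ : Euc d → ℝ) (χ : ℕ → ℝ → ℂ) (𝔉 : Finset (DyadicCube d))
    (f : DyadicCube d → Euc d → ℂ) (x : Euc d) : ℂ :=
  Finset.sum ((𝔉.image (fun Q => Q.k)).filter (fun j => 1 ≤ j)) fun (j : ℤ) =>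
    ((2:ℝ) ^ ((j : ℝ) * ((d : ℝ) + 1) / 2)) •
      mulOp (fun ξ => χ j.toNat ((2:ℝ) ^ j * (1 - ρ ξ)))
        (fun y => ∑ Q ∈ 𝔉.filter (fun Q' => Q'.k = j), f Q y) x

/-- The statement `VBR(p,r)`. -/
def VBR (d : ℕ) (ρ : Euc d → ℝ) (p r : ℝ) : Prop :=
  ∃ (M : ℕ) (C : ℝ), 1 ≤ M ∧
    ∀ χ : ℕ → ℝ → ℂ, (∀ j : ℕ, 1 ≤ j → MemYM M (χ j)) →
    ∀ (𝔉 : Finset (DyadicCube d)) (f : DyadicCube d → Euc d → ℂ),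
      (∀ Q ∈ 𝔉, Function.support (f Q) ⊆ closure Q.set) →
      eLpNorm (vbrSum ρ χ 𝔉 f) (ENNReal.ofReal r) volume ≤
        ENNReal.ofReal C *
          (∑ Q ∈ 𝔉, volume Q.set * eLpNorm (f Q) (ENNReal.ofReal p) volume ^ r) ^ (1 / r)

/-- `Hyp(p∘, r∘)`: `VBR(p,r)` holds for all `p ∈ [2(d+1)/(d+3), p∘)`
and all `r ∈ [p, r_*(p,p∘,r∘))`. -/
def Hyp (d : ℕ) (ρ : Euc d → ℝ) (p0 r0 : ℝ) : Prop :=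
  ∀ p r : ℝ, 2 * ((d : ℝ) + 1) / ((d : ℝ) + 3) ≤ p → p < p0 →
    p ≤ r → r < rStar d p p0 r0 → VBR d ρ p r

/-- The operator `A_{λ,ℓ} = 2^{ℓ(λ + (d+1)/2)} h_{λ,ℓ}(ρ(D))`. -/
def Aop {d : ℕ} (ρ : Euc d → ℝ) (h : ℕ → ℝ → ℂ) (lam : ℝ) (ℓ : ℕ)
    (f : Euc d → ℂ) (x : Euc d) : ℂ :=
  ((2:ℝ) ^ ((ℓ : ℝ) * (lam + ((d : ℝ) + 1) / 2))) • mulOp (fun ξ => h ℓ (ρ ξ)) f x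

/-- `𝒜_{s,𝔔} F = Σ_{ℓ ≥ s} Σ_{Q ∈ 𝔔_{ℓ-s}} A_{λ,ℓ}[F_Q 1_Q]`. -/
def AopSum {d : ℕ} (ρ : Euc d → ℝ) (h : ℕ → ℝ → ℂ) (lam : ℝ) (s : ℕ)
    (𝔔 : Finset (DyadicCube d)) (F : DyadicCube d → Euc d → ℂ) (x : Euc d) : ℂ :=
  ∑ Q ∈ 𝔔, Aop ρ h lam (Q.k.toNat + s) (Q.set.indicator (F Q)) x

/-- `Ξ_{s,𝔔}[F,β] = Σ_{ℓ ≥ s} Σ_{Q ∈ 𝔔_{ℓ-s}} β(Q) A_{λ,ℓ}[F_Q 1_Q]`. -/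
def XiSum {d : ℕ} (ρ : Euc d → ℝ) (h : ℕ → ℝ → ℂ) (lam : ℝ) (s : ℕ)
    (𝔔 : Finset (DyadicCube d)) (F : DyadicCube d → Euc d → ℂ)
    (β : DyadicCube d → ℂ) (x : Euc d) : ℂ :=
  ∑ Q ∈ 𝔔, β Q * Aop ρ h lam (Q.k.toNat + s) (Q.set.indicator (F Q)) x

/-- `‖F‖_{ℓ^∞(L^p)} = sup_{Q ∈ 𝔔} ‖F_Q‖_{L^p}`. -/
def supLp {d : ℕ} (p : ℝ) (𝔔 : Finset (DyadicCube d))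
    (F : DyadicCube d → Euc d → ℂ) : ℝ≥0∞ :=
  ⨆ Q ∈ 𝔔, eLpNorm (F Q) (ENNReal.ofReal p) volume

/-- `‖β‖_{ℓ^{r,1}(μ)} = ∫_0^∞ μ({Q ∈ 𝔔 : |β(Q)| > α})^{1/r} dα`. -/
def lorentzNorm {d : ℕ} (r : ℝ) (𝔔 : Finset (DyadicCube d))
    (β : DyadicCube d → ℂ) : ℝ≥0∞ :=
  ∫⁻ α in Set.Ioi (0:ℝ),
    (∑ Q ∈ 𝔔, if α < ‖β Q‖ then volume Q.set else 0) ^ (1 / r)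

/-! Dilating `Φ` by `2` turns `Φ̂` into `2 Φ̂(2·)`, so
`Ψ̂⁽ʲ⁾(ϱ) = 2^{j+1} Φ̂⁽ʲ⁾(2ϱ) - Φ̂⁽ʲ⁾(ϱ)`. The integral `∫_0^∞ ϱ^λ Ψ̂⁽ʲ⁾(ϱ) dϱ` is the Mellin
transform of `Ψ̂⁽ʲ⁾` at `λ + 1`, which converges because `Φ̂` is a Schwartz function, and the
substitution `ϱ ↦ ϱ / 2` turns it into `(2^{j-λ} - 1) ∫_0^∞ ϱ^λ Φ̂⁽ʲ⁾(ϱ) dϱ`. The factor vanishes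
when `j = λ`, and the integral vanishes by the cancellation hypothesis otherwise. -/

open Set
open scoped FourierTransform SchwartzMap

namespace SchwartzMap

variable {E : Type*} [NormedAddCommGroup E] [NormedSpace ℝ E]

theorem iteratedDeriv_eq_derivCLM_iterate (f : 𝓢(ℝ, E)) (n : ℕ) :
    iteratedDeriv n f = ⇑((derivCLM ℝ E)^[n] f) := by
  induction n generalizing f with
  | zero => simp
  | succ n ih =>
    rw [iteratedDeriv_succ', Function.iterate_succ_apply, ← ih]
    rfl

theorem mellinConvergent [NormedSpace ℂ E] (f : 𝓢(ℝ, E)) {s : ℂ} (hs : 0 < s.re) :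
    MellinConvergent f s := by
  refine mellinConvergent_of_isBigO_rpow (a := s.re + 1) (b := 0)
    (f.continuous.locallyIntegrable.locallyIntegrableOn _) ?_ (by linarith) ?_ hs
  · refine ((f.isBigO_cocompact_rpow (-(s.re + 1))).mono atTop_le_cocompact).trans_eventuallyEq
      ?_
    filter_upwards [Filter.eventually_gt_atTop (0 : ℝ)] with x hx
    rw [Real.norm_of_nonneg hx.le]
  · simpa using (f.continuous.tendsto 0).mono_left nhdsWithin_le_nhds |>.isBigO_one ℝ

end SchwartzMap

theorem FT1_eq_fourier (φ : ℝ → ℂ) (ϱ : ℝ) : FT1 φ ϱ = 𝓕 φ ((2 * Real.pi)⁻¹ * ϱ) := by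
  rw [Real.fourier_real_eq_integral_exp_smul, FT1]
  congr 1 with s
  rw [smul_eq_mul, mul_comm]
  congr 2
  field_simp
  push_cast
  ring

theorem FT1_comp_div (φ : ℝ → ℂ) {a : ℝ} (ha : 0 < a) (ϱ : ℝ) :
    FT1 (fun s => φ (s / a)) ϱ = a * FT1 φ (a * ϱ) := by
  have := Measure.integral_comp_div
    (fun u : ℝ => φ u * Complex.exp (-(Complex.I * ((a * u : ℝ) : ℂ) * ϱ))) a
  simp only [mul_div_cancel₀ _ ha.ne', abs_of_pos ha, Complex.real_smul] at this
  rw [FT1, FT1, this]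
  congr 2 with u
  push_cast
  ring_nf

theorem FT1_sub {φ ψ : ℝ → ℂ} (hφ : Integrable φ) (hψ : Integrable ψ) (ϱ : ℝ) :
    FT1 (fun s => φ s - ψ s) ϱ = FT1 φ ϱ - FT1 ψ ϱ := by
  have hchar : ∀ χ : ℝ → ℂ, Integrable χ →
      Integrable fun s : ℝ => χ s * Complex.exp (-(Complex.I * s * ϱ)) := fun χ hχ =>
    hχ.mul_bdd (by fun_prop) (c := 1) <| ae_of_all _ fun s => by
      rw [show -(Complex.I * s * ϱ) = ((-(s * ϱ) : ℝ) : ℂ) * Complex.I by push_cast; ring,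
        Complex.norm_exp_ofReal_mul_I]
  simp only [FT1, sub_mul]
  exact integral_sub (hchar φ hφ) (hchar ψ hψ)

theorem FT1_schwartzMap (f : 𝓢(ℝ, ℂ)) : FT1 f = fun ϱ => 𝓕 f ((2 * Real.pi)⁻¹ * ϱ) := by
  ext ϱ
  rw [FT1_eq_fourier, SchwartzMap.fourier_coe]

theorem contDiff_FT1_schwartzMap (f : 𝓢(ℝ, ℂ)) {n : ℕ∞} : ContDiff ℝ n (FT1 f) := by
  rw [FT1_schwartzMap]
  exact ((𝓕 f).smooth n).comp (contDiff_const.mul contDiff_id)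

theorem mellinConvergent_iteratedDeriv_FT1_schwartzMap (f : 𝓢(ℝ, ℂ)) (n : ℕ) {s : ℂ}
    (hs : 0 < s.re) : MellinConvergent (iteratedDeriv n (FT1 f)) s := by
  rw [FT1_schwartzMap, iteratedDeriv_comp_const_smul ((𝓕 f).smooth n),
    SchwartzMap.iteratedDeriv_eq_derivCLM_iterate]
  exact (((MellinConvergent.comp_mul_left (by positivity)).2
    (SchwartzMap.mellinConvergent _ hs)).const_smul _)

theorem iteratedDeriv_const_mul_comp_mul_sub {g : ℝ → ℂ} {n : ℕ} (hg : ContDiff ℝ n g)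
    (c : ℂ) (a x : ℝ) :
    iteratedDeriv n (fun y => c * g (a * y) - g y) x =
      c * (a ^ n : ℝ) * iteratedDeriv n g (a * x) - iteratedDeriv n g x := by
  have hdil : ContDiff ℝ n fun y => g (a * y) := hg.comp (contDiff_const.mul contDiff_id)
  rw [iteratedDeriv_fun_sub (contDiff_const.mul hdil).contDiffAt hg.contDiffAt,
    iteratedDeriv_const_mul_field, iteratedDeriv_comp_const_smul hg]
  simp only [Complex.real_smul, mul_assoc]

theorem mellin_const_mul_comp_mul_left_sub {G : ℝ → ℂ} {s : ℂ} (hG : MellinConvergent G s)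
    (c : ℂ) {a : ℝ} (ha : 0 < a) :
    mellin (fun t => c * G (a * t) - G t) s = (c * (a : ℂ) ^ (-s) - 1) * mellin G s := by
  have hdil : MellinConvergent (fun t => c * G (a * t)) s :=
    ((MellinConvergent.comp_mul_left ha).2 hG).const_smul c
  rw [(hasMellin_sub hdil hG).2,
    show (fun t => c * G (a * t)) = fun t => c • G (a * t) from rfl, mellin_const_smul,
    mellin_comp_mul_left _ _ ha, smul_eq_mul, smul_eq_mul]
  ring

theorem setIntegral_Ioi_rpow_mul_eq_mellin (g : ℝ → ℂ) (lam : ℝ) :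
    ∫ ϱ in Ioi (0 : ℝ), ((ϱ ^ lam : ℝ) : ℂ) * g ϱ = mellin g (lam + 1) := by
  refine setIntegral_congr_fun measurableSet_Ioi fun ϱ hϱ => ?_
  rw [add_sub_cancel_right, smul_eq_mul, Complex.ofReal_cpow (le_of_lt hϱ)]

theorem mellin_iteratedDeriv_FT1_dilate_sub (f : 𝓢(ℝ, ℂ)) {a : ℝ} (ha : 0 < a) (n : ℕ)
    {s : ℂ} (hs : 0 < s.re) :
    mellin (iteratedDeriv n (FT1 fun x => f (x / a) - f x)) s =
      ((a : ℂ) ^ (n + 1) * (a : ℂ) ^ (-s) - 1) * mellin (iteratedDeriv n (FT1 f)) s := by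
  have hFT : FT1 (fun x => f (x / a) - f x) = fun ϱ => (a : ℂ) * FT1 f (a * ϱ) - FT1 f ϱ := by
    ext ϱ
    rw [FT1_sub (f.integrable.comp_div ha.ne') f.integrable, FT1_comp_div _ ha]
  have hderiv : iteratedDeriv n (FT1 fun x => f (x / a) - f x) =
      fun ϱ => (a : ℂ) ^ (n + 1) * iteratedDeriv n (FT1 f) (a * ϱ) -
        iteratedDeriv n (FT1 f) ϱ := by
    ext ϱ
    rw [hFT, iteratedDeriv_const_mul_comp_mul_sub (contDiff_FT1_schwartzMap f)]
    push_cast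
    ring
  rw [hderiv, mellin_const_mul_comp_mul_left_sub
    (mellinConvergent_iteratedDeriv_FT1_schwartzMap f n hs) _ ha]

theorem setIntegral_Ioi_rpow_mul_iteratedDeriv_FT1R_dilate_sub {Φ : ℝ → ℝ}
    (hΦsm : ContDiff ℝ (⊤ : ℕ∞) Φ) (hΦcpt : HasCompactSupport Φ) {a : ℝ} (ha : 0 < a) (n : ℕ)
    {lam : ℝ} (hlam : -1 < lam) :
    ∫ ϱ in Ioi (0 : ℝ),
        ((ϱ ^ lam : ℝ) : ℂ) * iteratedDeriv n (FT1R fun x => Φ (x / a) - Φ x) ϱ =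
      ((a ^ ((n : ℝ) - lam) - 1 : ℝ) : ℂ) *
        ∫ ϱ in Ioi (0 : ℝ), ((ϱ ^ lam : ℝ) : ℂ) * iteratedDeriv n (FT1R Φ) ϱ := by
  set f : 𝓢(ℝ, ℂ) := (hΦcpt.comp_left Complex.ofReal_zero).toSchwartzMap
    (Complex.ofRealCLM.contDiff.comp hΦsm)
  have hFT1R : FT1R Φ = FT1 f := rfl
  have hFT1R_dilate : FT1R (fun x => Φ (x / a) - Φ x) = FT1 fun x => f (x / a) - f x := by
    simp only [FT1R, Complex.ofReal_sub]
    rfl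
  have hcoef : (a : ℂ) ^ (n + 1) * (a : ℂ) ^ (-((lam : ℂ) + 1)) =
      ((a ^ ((n : ℝ) - lam) : ℝ) : ℂ) := by
    have hexp : -((lam : ℂ) + 1) = ((-(lam + 1) : ℝ) : ℂ) := by push_cast; ring
    rw [hexp, ← Complex.ofReal_cpow ha.le, ← Complex.ofReal_pow, ← Complex.ofReal_mul,
      ← Real.rpow_natCast, ← Real.rpow_add ha]
    congr 2
    push_cast
    ring
  rw [setIntegral_Ioi_rpow_mul_eq_mellin, setIntegral_Ioi_rpow_mul_eq_mellin, hFT1R_dilate,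
    hFT1R, mellin_iteratedDeriv_FT1_dilate_sub f ha n (by simp; linarith), hcoef,
    Complex.ofReal_sub, Complex.ofReal_one]

/-- Properties of `Ψ(x) = Φ∘(x/2) - Φ∘(x)`: it is even, smooth, compactly
supported, vanishes for `|s| ≤ 1/2` and `|s| ≥ 2`, and satisfies the full set of moment
cancellation conditions. -/
theorem Psi_properties (lam : ℝ) (hlam : 0 < lam) (N0 : ℕ) (Φ : ℝ → ℝ)
    (hΦsm : ContDiff ℝ (⊤ : ℕ∞) Φ) (hΦcpt : HasCompactSupport Φ)
    (hΦeven : ∀ s, Φ (-s) = Φ s)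
    (hΦone : ∀ s : ℝ, |s| ≤ 1/2 → Φ s = 1) (hΦzero : ∀ s : ℝ, 1 ≤ |s| → Φ s = 0)
    (hΦcanc : ∀ j : ℕ, j ≤ N0 → (j : ℝ) ≠ lam →
      (∫ ϱ in Set.Ioi (0:ℝ), ((ϱ ^ lam : ℝ) : ℂ) * iteratedDeriv j (FT1R Φ) ϱ) = 0) :
    ContDiff ℝ (⊤ : ℕ∞) (fun x : ℝ => Φ (x / 2) - Φ x) ∧
    HasCompactSupport (fun x : ℝ => Φ (x / 2) - Φ x) ∧
    (∀ s : ℝ, Φ (-s / 2) - Φ (-s) = Φ (s / 2) - Φ s) ∧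
    (∀ s : ℝ, |s| ≤ 1/2 → Φ (s / 2) - Φ s = 0) ∧
    (∀ s : ℝ, 2 ≤ |s| → Φ (s / 2) - Φ s = 0) ∧
    (∀ j : ℕ, j ≤ N0 →
      (∫ ϱ in Set.Ioi (0:ℝ),
        ((ϱ ^ lam : ℝ) : ℂ) * iteratedDeriv j (FT1R (fun x => Φ (x / 2) - Φ x)) ϱ) = 0) := by
  have habs_half (s : ℝ) : |s / 2| = |s| / 2 := by rw [abs_div, abs_two]
  refine ⟨(hΦsm.comp (contDiff_id.div_const 2)).sub hΦsm, ?_,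
    fun s => by rw [neg_div, hΦeven, hΦeven], fun s hs => ?_, fun s hs => ?_, fun j hj => ?_⟩
  · simpa only [smul_eq_mul, inv_mul_eq_div, Pi.sub_def] using
      (hΦcpt.comp_smul (inv_ne_zero (two_ne_zero (α := ℝ)))).sub hΦcpt
  · rw [hΦone s hs, hΦone (s / 2) (by rw [habs_half]; linarith), sub_self]
  · rw [hΦzero s (by linarith), hΦzero (s / 2) (by rw [habs_half]; linarith), sub_self]
  · rw [setIntegral_Ioi_rpow_mul_iteratedDeriv_FT1R_dilate_sub hΦsm hΦcpt two_pos j (by linarith)]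
    by_cases hjlam : (j : ℝ) = lam
    · simp [hjlam]
    · rw [hΦcanc j hj hjlam, mul_zero]
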